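/- arXiv:math/9912114 — 4 statements merged into one kernel-verified Lean document; each statement's English description precedes it below -/
import Mathlib

section
/- For every function f : ℂ² → ℂ, every h ∈ ℂ, and every λ = (λ₁,λ₂) ∈ ℂ² with θ(λ₊) ≠ 0 and θ(λ₋) ≠ 0, one has (M̃₁f)(λ₁,λ₂) = (H₊(H₋f))(λ₁,λ₂) = (H₋(H₊f))(λ₁,λ₂); that is, the operator M̃₁ factorizes as the product of the two commuting A₁-type difference operators H₊ and H₋. -/
open Complex

/-- The Jacobi theta function θ₁(z|τ). -/
noncomputable def th1 (τ z : ℂ) : ℂ :=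
  ∑' k : ℤ, exp (2 * (Real.pi : ℂ) * I *
    ((z + 1/2) * ((k : ℂ) + 1/2) + ((k : ℂ) + 1/2)^2 * τ / 2))

/-- The difference operator `M̃₁` of type `C₂`. -/
noncomputable def M1t (τ h : ℂ) (f : ℂ × ℂ → ℂ) (l : ℂ × ℂ) : ℂ :=
  th1 τ (l.1 + l.2 - h) * th1 τ (l.1 - l.2 - h)
      / (th1 τ (l.1 + l.2) * th1 τ (l.1 - l.2)) * f (l.1 + h, l.2)
  + th1 τ (l.1 + l.2 + h) * th1 τ (l.1 - l.2 + h)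
      / (th1 τ (l.1 + l.2) * th1 τ (l.1 - l.2)) * f (l.1 - h, l.2)
  + th1 τ (l.1 + l.2 - h) * th1 τ (l.1 - l.2 + h)
      / (th1 τ (l.1 + l.2) * th1 τ (l.1 - l.2)) * f (l.1, l.2 + h)
  + th1 τ (l.1 + l.2 + h) * th1 τ (l.1 - l.2 - h)
      / (th1 τ (l.1 + l.2) * th1 τ (l.1 - l.2)) * f (l.1, l.2 - h)

/-- The `A₁`-type difference operator `H₊`. -/
noncomputable def Hp (τ h : ℂ) (f : ℂ × ℂ → ℂ) (l : ℂ × ℂ) : ℂ :=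
  th1 τ (l.1 + l.2 - h) / th1 τ (l.1 + l.2) * f (l.1 + h/2, l.2 + h/2)
  + th1 τ (l.1 + l.2 + h) / th1 τ (l.1 + l.2) * f (l.1 - h/2, l.2 - h/2)

/-- The `A₁`-type difference operator `H₋`. -/
noncomputable def Hm (τ h : ℂ) (f : ℂ × ℂ → ℂ) (l : ℂ × ℂ) : ℂ :=
  th1 τ (l.1 - l.2 - h) / th1 τ (l.1 - l.2) * f (l.1 + h/2, l.2 - h/2)
  + th1 τ (l.1 - l.2 + h) / th1 τ (l.1 - l.2) * f (l.1 - h/2, l.2 + h/2)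

/- A shift along `(1, 1)` leaves `λ₋` fixed and a shift along `(1, -1)` leaves `λ₊` fixed, so in
either composite the coefficients of the two factors simply multiply, and the half-shifts add up
to the four shifts of `M̃₁`. -/

theorem Hp_Hm_eq_M1t (τ h : ℂ) (f : ℂ × ℂ → ℂ) (l : ℂ × ℂ) :
    Hp τ h (Hm τ h f) l = M1t τ h f l := by
  simp only [M1t, Hp, Hm]
  ring_nf

theorem Hm_Hp_eq_M1t (τ h : ℂ) (f : ℂ × ℂ → ℂ) (l : ℂ × ℂ) :
    Hm τ h (Hp τ h f) l = M1t τ h f l := by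
  simp only [M1t, Hp, Hm]
  ring_nf

theorem stmt_1_general (τ : ℂ) (h : ℂ) (f : ℂ × ℂ → ℂ) (l : ℂ × ℂ) :
    M1t τ h f l = Hp τ h (Hm τ h f) l ∧ M1t τ h f l = Hm τ h (Hp τ h f) l :=
  ⟨(Hp_Hm_eq_M1t τ h f l).symm, (Hm_Hp_eq_M1t τ h f l).symm⟩

/-- Lemma 5 ("split"), first identity: `M̃₁ = H₊H₋ = H₋H₊`. -/
theorem stmt_1 (τ : ℂ) (hτ : 0 < τ.im) (h : ℂ) (f : ℂ × ℂ → ℂ) (l : ℂ × ℂ)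
    (hp : th1 τ (l.1 + l.2) ≠ 0) (hm : th1 τ (l.1 - l.2) ≠ 0) :
    M1t τ h f l = Hp τ h (Hm τ h f) l ∧ M1t τ h f l = Hm τ h (Hp τ h f) l :=
  stmt_1_general τ h f l
end

section
/- For every function f : ℂ² → ℂ, every h ∈ ℂ, and every λ = (λ₁,λ₂) ∈ ℂ² such that θ(λ₊), θ(λ₋), θ(λ₊+h), θ(λ₊−h), θ(λ₋+h), θ(λ₋−h) are all nonzero, one has (M̃₂f)(λ₁,λ₂) = (H₊(H₊f))(λ₁,λ₂) + (H₋(H₋f))(λ₁,λ₂); that is, M̃₂ = H₊² + H₋². -/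
open Complex

/-- The difference operator `M̃₂` of type `C₂`. -/
noncomputable def M2t (τ h : ℂ) (f : ℂ × ℂ → ℂ) (l : ℂ × ℂ) : ℂ :=
  (∑ ε ∈ ({1, -1} : Finset ℤ), ∑ ε' ∈ ({1, -1} : Finset ℤ),
    th1 τ ((ε : ℂ) * l.1 + (ε' : ℂ) * l.2 - h)
      / th1 τ ((ε : ℂ) * l.1 + (ε' : ℂ) * l.2 + h)
      * f (l.1 + (ε : ℂ) * h, l.2 + (ε' : ℂ) * h))
  + (∑ ε ∈ ({1, -1} : Finset ℤ), ∑ ε' ∈ ({1, -1} : Finset ℤ),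
      th1 τ ((ε : ℂ) * l.1 + (ε' : ℂ) * l.2 - h)
        * th1 τ ((ε : ℂ) * l.1 + (ε' : ℂ) * l.2 + 2 * h)
        / (th1 τ ((ε : ℂ) * l.1 + (ε' : ℂ) * l.2)
            * th1 τ ((ε : ℂ) * l.1 + (ε' : ℂ) * l.2 + h))) * f l

/-!
Since `θ₁` is odd, the coefficients `θ(x + h)/θ(x - h)` and `θ(x + h)θ(x - 2h)/(θ(x)θ(x - h))`
produced by squaring an `A₁` operator at `x` are the `M̃₂` coefficients at `-x`. Hence `H₊²`
yields exactly the terms of `M̃₂` with `ε = ε'` (`x = ±λ₊`) and `H₋²` those with `ε = -ε'`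
(`x = ±λ₋`).
-/

lemma th1_neg (τ z : ℂ) : th1 τ (-z) = -th1 τ z := by
  unfold th1
  rw [← tsum_neg, ← (Equiv.subLeft (-1 : ℤ)).tsum_eq]
  congr 1 with k
  -- under `k ↦ -1 - k` the exponent changes by `πi` plus an integer multiple of `2πi`
  have hexp : 2 * (Real.pi : ℂ) * I * ((-z + 1/2) * (((-1 - k : ℤ) : ℂ) + 1/2)
        + (((-1 - k : ℤ) : ℂ) + 1/2)^2 * τ / 2)
      = 2 * (Real.pi : ℂ) * I * ((z + 1/2) * ((k : ℂ) + 1/2) + ((k : ℂ) + 1/2)^2 * τ / 2)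
        + ((-k - 1 : ℤ) : ℂ) * (2 * Real.pi * I) + Real.pi * I := by
    push_cast
    ring
  rw [Equiv.subLeft_apply, hexp, exp_add, exp_add, exp_int_mul_two_pi_mul_I, exp_pi_mul_I]
  ring

section Coefficients

variable (τ h : ℂ)

noncomputable def shiftCoeff (x : ℂ) : ℂ :=
  th1 τ (x - h) / th1 τ (x + h)

noncomputable def diagCoeff (x : ℂ) : ℂ :=
  th1 τ (x - h) * th1 τ (x + 2 * h) / (th1 τ x * th1 τ (x + h))

lemma shiftCoeff_neg (x : ℂ) : shiftCoeff τ h (-x) = th1 τ (x + h) / th1 τ (x - h) := by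
  rw [shiftCoeff, show -x - h = -(x + h) by ring, show -x + h = -(x - h) by ring,
    th1_neg, th1_neg, neg_div_neg_eq]

lemma diagCoeff_neg (x : ℂ) :
    diagCoeff τ h (-x) = th1 τ (x + h) * th1 τ (x - 2 * h) / (th1 τ x * th1 τ (x - h)) := by
  rw [diagCoeff, show -x - h = -(x + h) by ring, show -x + 2 * h = -(x - 2 * h) by ring,
    show -x + h = -(x - h) by ring, th1_neg, th1_neg, th1_neg, th1_neg, neg_mul_neg, neg_mul_neg]

end Coefficients

lemma M2t_apply (τ h : ℂ) (f : ℂ × ℂ → ℂ) (l : ℂ × ℂ) :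
    M2t τ h f l =
      shiftCoeff τ h (l.1 + l.2) * f (l.1 + h, l.2 + h)
      + shiftCoeff τ h (-(l.1 + l.2)) * f (l.1 - h, l.2 - h)
      + shiftCoeff τ h (l.1 - l.2) * f (l.1 + h, l.2 - h)
      + shiftCoeff τ h (-(l.1 - l.2)) * f (l.1 - h, l.2 + h)
      + (diagCoeff τ h (l.1 + l.2) + diagCoeff τ h (-(l.1 + l.2))
        + diagCoeff τ h (l.1 - l.2) + diagCoeff τ h (-(l.1 - l.2))) * f l := by
  simp only [M2t, shiftCoeff, diagCoeff, Finset.sum_pair (by decide : (1 : ℤ) ≠ -1)]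
  push_cast
  ring_nf

lemma Hp_Hp_apply (τ h : ℂ) (f : ℂ × ℂ → ℂ) (l : ℂ × ℂ)
    (hp : th1 τ (l.1 + l.2) ≠ 0) (hpp : th1 τ (l.1 + l.2 + h) ≠ 0)
    (hpm : th1 τ (l.1 + l.2 - h) ≠ 0) :
    Hp τ h (Hp τ h f) l =
      shiftCoeff τ h (l.1 + l.2) * f (l.1 + h, l.2 + h)
      + shiftCoeff τ h (-(l.1 + l.2)) * f (l.1 - h, l.2 - h)
      + (diagCoeff τ h (l.1 + l.2) + diagCoeff τ h (-(l.1 + l.2))) * f l := by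
  rw [shiftCoeff_neg, diagCoeff_neg]
  simp only [Hp, shiftCoeff, diagCoeff]
  ring_nf
  ring_nf at hp hpp hpm
  field_simp
  ring

lemma Hm_Hm_apply (τ h : ℂ) (f : ℂ × ℂ → ℂ) (l : ℂ × ℂ)
    (hm : th1 τ (l.1 - l.2) ≠ 0) (hmp : th1 τ (l.1 - l.2 + h) ≠ 0)
    (hmm : th1 τ (l.1 - l.2 - h) ≠ 0) :
    Hm τ h (Hm τ h f) l =
      shiftCoeff τ h (l.1 - l.2) * f (l.1 + h, l.2 - h)
      + shiftCoeff τ h (-(l.1 - l.2)) * f (l.1 - h, l.2 + h)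
      + (diagCoeff τ h (l.1 - l.2) + diagCoeff τ h (-(l.1 - l.2))) * f l := by
  rw [shiftCoeff_neg, diagCoeff_neg]
  simp only [Hm, shiftCoeff, diagCoeff]
  ring_nf
  ring_nf at hm hmp hmm
  field_simp
  ring

theorem stmt_2_general (τ : ℂ) (h : ℂ) (f : ℂ × ℂ → ℂ) (l : ℂ × ℂ)
    (hp : th1 τ (l.1 + l.2) ≠ 0) (hm : th1 τ (l.1 - l.2) ≠ 0)
    (hpp : th1 τ (l.1 + l.2 + h) ≠ 0) (hpm : th1 τ (l.1 + l.2 - h) ≠ 0)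
    (hmp : th1 τ (l.1 - l.2 + h) ≠ 0) (hmm : th1 τ (l.1 - l.2 - h) ≠ 0) :
    M2t τ h f l = Hp τ h (Hp τ h f) l + Hm τ h (Hm τ h f) l := by
  rw [M2t_apply, Hp_Hp_apply τ h f l hp hpp hpm, Hm_Hm_apply τ h f l hm hmp hmm]
  ring

/-- Lemma 5 ("split"), second identity: `M̃₂ = H₊² + H₋²`. -/
theorem stmt_2 (τ : ℂ) (hτ : 0 < τ.im) (h : ℂ) (f : ℂ × ℂ → ℂ) (l : ℂ × ℂ)
    (hp : th1 τ (l.1 + l.2) ≠ 0) (hm : th1 τ (l.1 - l.2) ≠ 0)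
    (hpp : th1 τ (l.1 + l.2 + h) ≠ 0) (hpm : th1 τ (l.1 + l.2 - h) ≠ 0)
    (hmp : th1 τ (l.1 - l.2 + h) ≠ 0) (hmm : th1 τ (l.1 - l.2 - h) ≠ 0) :
    M2t τ h f l = Hp τ h (Hp τ h f) l + Hm τ h (Hm τ h f) l :=
  stmt_2_general τ h f l hp hm hpp hpm hmp hmm
end

section
/- For each i ∈ {2,3,4} and all z, h ∈ ℂ, the entire-function identity θ₁(h|τ)·θ_i(h|τ)·[θ₁(z−h|τ)·θ_i(z+h|τ) + θ₁(z+h|τ)·θ_i(z−h|τ)] = θ₁(2h|τ)·θ_i(0|τ)·θ₁(z|τ)·θ_i(z|τ) holds. Equivalently, whenever θ₁(z|τ), θ₁(h|τ), θ_i(h|τ) ≠ 0, the function f(z) = θ_i(z|τ) solves the difference Lamé equation [θ₁(z−h)/θ₁(z)]·f(z+h) + [θ₁(z+h)/θ₁(z)]·f(z−h) = E_i·f(z) with eigenvalue E_i = θ₁(2h)θ_i(0)/(θ₁(h)θ_i(h)). -/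
/-!
With θ[a;b](z|τ) = Σₖ e((z + b)(k + a) + (k + a)²τ/2) (`thetaChar a b τ z`), we have
θ₁ = θ[½;½], θ₂ = θ[½;0], θ₃ = θ[0;0], θ₄ = θ[0;½]. Split the double series for
θ[a;b](x|τ) θ[a';b'](y|τ) according to the parity of k + m and write (k, m) = (α + β, α - β) or
(α + β + 1, α - β): the exponents separate exactly, giving two products of theta functions with
τ replaced by 2τ, evaluated at x + y and x - y. For θ₁ θᵢ, after the reflection and shift
symmetries of the characteristics, this reads θ₁(x) θᵢ(y) = A(x+y) B(x-y) + B(x+y) A(x-y) with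
A even and B odd, and the identity follows algebraically by evaluating at (h, h), (z ∓ h, z ± h),
(2h, 0) and (z, z).
-/

open Complex

/-- The Jacobi theta function θ₂(z|τ). -/
noncomputable def th2 (τ z : ℂ) : ℂ :=
  ∑' k : ℤ, exp (2 * (Real.pi : ℂ) * I *
    (z * ((k : ℂ) + 1/2) + ((k : ℂ) + 1/2)^2 * τ / 2))

/-- The Jacobi theta function θ₃(z|τ). -/
noncomputable def th3 (τ z : ℂ) : ℂ :=
  ∑' k : ℤ, exp (2 * (Real.pi : ℂ) * I * (z * (k : ℂ) + (k : ℂ)^2 * τ / 2))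

/-- The Jacobi theta function θ₄(z|τ). -/
noncomputable def th4 (τ z : ℂ) : ℂ :=
  ∑' k : ℤ, exp (2 * (Real.pi : ℂ) * I * ((z + 1/2) * (k : ℂ) + (k : ℂ)^2 * τ / 2))

noncomputable def thetaCharTerm (a b τ z : ℂ) (k : ℤ) : ℂ :=
  exp (2 * (Real.pi : ℂ) * I * ((z + b) * ((k : ℂ) + a) + ((k : ℂ) + a) ^ 2 * τ / 2))

noncomputable def thetaChar (a b τ z : ℂ) : ℂ :=
  ∑' k : ℤ, thetaCharTerm a b τ z k

lemma thetaCharTerm_eq_mul_jacobiTheta₂_term (a b τ z : ℂ) (k : ℤ) :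
    thetaCharTerm a b τ z k =
      exp (2 * (Real.pi : ℂ) * I * (a * (z + b) + a ^ 2 * τ / 2)) *
        jacobiTheta₂_term k (z + b + a * τ) τ := by
  rw [thetaCharTerm, jacobiTheta₂_term, ← exp_add]
  ring_nf

lemma summable_norm_thetaCharTerm {τ : ℂ} (hτ : 0 < τ.im) (a b z : ℂ) :
    Summable fun k => ‖thetaCharTerm a b τ z k‖ := by
  simp_rw [thetaCharTerm_eq_mul_jacobiTheta₂_term, norm_mul]
  exact (summable_norm_iff.mpr ((summable_jacobiTheta₂_term_iff _ _).mpr hτ)).mul_left _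

lemma thetaChar_int_add (a b τ z : ℂ) (n : ℤ) :
    thetaChar (a + n) b τ z = thetaChar a b τ z := by
  rw [thetaChar, thetaChar, ← (Equiv.addRight n).tsum_eq (thetaCharTerm a b τ z)]
  refine tsum_congr fun k => ?_
  simp only [thetaCharTerm, Equiv.coe_addRight, Int.cast_add]
  ring_nf

lemma thetaChar_add_int (a b τ z : ℂ) (n : ℤ) :
    thetaChar a (b + n) τ z = exp (2 * (Real.pi : ℂ) * I * (n * a)) * thetaChar a b τ z := by
  rw [thetaChar, thetaChar, ← tsum_mul_left]
  refine tsum_congr fun k => ?_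
  rw [thetaCharTerm, thetaCharTerm, ← exp_add]
  exact exp_eq_exp_iff_exists_int.mpr ⟨n * k, by push_cast; ring⟩

lemma thetaChar_neg (a b τ z : ℂ) : thetaChar a b τ (-z) = thetaChar (-a) (-b) τ z := by
  rw [thetaChar, thetaChar, ← (Equiv.neg ℤ).tsum_eq]
  refine tsum_congr fun k => ?_
  simp only [thetaCharTerm, Equiv.neg_apply, Int.cast_neg]
  ring_nf

lemma thetaChar_one_sub (a b τ z : ℂ) : thetaChar (1 - a) b τ z = thetaChar a (-b) τ (-z) := by
  rw [thetaChar_neg, neg_neg, sub_eq_neg_add, ← Int.cast_one, thetaChar_int_add]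

lemma thetaChar_sub_one_quarter (b τ z : ℂ) :
    thetaChar (1 / 4) (b - 1) τ z = -I * thetaChar (1 / 4) b τ z := by
  rw [show b - 1 = b + ((-1 : ℤ) : ℂ) by push_cast; ring, thetaChar_add_int,
    show 2 * (Real.pi : ℂ) * I * (((-1 : ℤ) : ℂ) * (1 / 4)) = -Real.pi / 2 * I by push_cast; ring,
    exp_neg_pi_div_two_mul_I]

lemma tsum_int_prod_eq_even_add_odd {E : Type*} [NormedAddCommGroup E] [CompleteSpace E]
    {f : ℤ × ℤ → E} (hf : Summable f) :
    ∑' p, f p =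
      ∑' p : ℤ × ℤ, f (p.1 + p.2, p.1 - p.2) + ∑' p : ℤ × ℤ, f (p.1 + p.2 + 1, p.1 - p.2) := by
  let e : Bool × ℤ × ℤ ≃ ℤ × ℤ :=
    { toFun := fun p => (p.2.1 + p.2.2 + cond p.1 1 0, p.2.1 - p.2.2)
      invFun := fun q => (decide ((q.1 + q.2) % 2 = 1), (q.1 + q.2) / 2, (q.1 - q.2) / 2)
      left_inv := by rintro ⟨_ | _, α, β⟩ <;> simp <;> omega
      right_inv := by rintro ⟨k, m⟩; by_cases hkm : (k + m) % 2 = 1 <;> simp [hkm] <;> omega }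
  have hfe : Summable fun p => f (e p) := e.summable_iff.mpr hf
  rw [← e.tsum_eq, hfe.tsum_prod' hfe.prod_factor, tsum_bool]
  simp [e]

lemma thetaCharTerm_mul_thetaCharTerm_even (a b a' b' τ x y : ℂ) (α β : ℤ) :
    thetaCharTerm a b τ x (α + β) * thetaCharTerm a' b' τ y (α - β) =
      thetaCharTerm ((a + a') / 2) (b + b') (2 * τ) (x + y) α *
        thetaCharTerm ((a - a') / 2) (b - b') (2 * τ) (x - y) β := by
  simp only [thetaCharTerm, ← exp_add]
  congr 1
  push_cast
  ring

lemma thetaCharTerm_mul_thetaCharTerm_odd (a b a' b' τ x y : ℂ) (α β : ℤ) :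
    thetaCharTerm a b τ x (α + β + 1) * thetaCharTerm a' b' τ y (α - β) =
      thetaCharTerm ((a + a' + 1) / 2) (b + b') (2 * τ) (x + y) α *
        thetaCharTerm ((a - a' + 1) / 2) (b - b') (2 * τ) (x - y) β := by
  simp only [thetaCharTerm, ← exp_add]
  congr 1
  push_cast
  ring

theorem thetaChar_mul_thetaChar {τ : ℂ} (hτ : 0 < τ.im) (a b a' b' x y : ℂ) :
    thetaChar a b τ x * thetaChar a' b' τ y =
      thetaChar ((a + a') / 2) (b + b') (2 * τ) (x + y) *
          thetaChar ((a - a') / 2) (b - b') (2 * τ) (x - y) +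
        thetaChar ((a + a' + 1) / 2) (b + b') (2 * τ) (x + y) *
          thetaChar ((a - a' + 1) / 2) (b - b') (2 * τ) (x - y) := by
  have h2τ : 0 < (2 * τ).im := by simpa using hτ
  have hs := summable_norm_thetaCharTerm hτ
  have hs₂ := summable_norm_thetaCharTerm h2τ
  unfold thetaChar
  rw [tsum_mul_tsum_of_summable_norm (hs a b x) (hs a' b' y),
    tsum_int_prod_eq_even_add_odd
      (f := fun p => thetaCharTerm a b τ x p.1 * thetaCharTerm a' b' τ y p.2)
      (summable_mul_of_summable_norm (hs a b x) (hs a' b' y)),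
    tsum_mul_tsum_of_summable_norm (hs₂ _ _ _) (hs₂ _ _ _),
    tsum_mul_tsum_of_summable_norm (hs₂ _ _ _) (hs₂ _ _ _)]
  simp only [thetaCharTerm_mul_thetaCharTerm_even, thetaCharTerm_mul_thetaCharTerm_odd]

lemma th1_eq_thetaChar (τ : ℂ) : th1 τ = thetaChar (1 / 2) (1 / 2) τ := rfl

lemma th2_eq_thetaChar (τ : ℂ) : th2 τ = thetaChar (1 / 2) 0 τ := by
  funext z; simp [th2, thetaChar, thetaCharTerm]

lemma th3_eq_thetaChar (τ : ℂ) : th3 τ = thetaChar 0 0 τ := by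
  funext z; simp [th3, thetaChar, thetaCharTerm]

lemma th4_eq_thetaChar (τ : ℂ) : th4 τ = thetaChar 0 (1 / 2) τ := by
  funext z; simp [th4, thetaChar, thetaCharTerm]

lemma thetaChar_half_mul_thetaChar_zero {τ : ℂ} (hτ : 0 < τ.im) (b x y : ℂ) :
    thetaChar (1 / 2) (1 / 2) τ x * thetaChar 0 b τ y =
      thetaChar (1 / 4) (1 / 2 + b) (2 * τ) (x + y) *
          thetaChar (1 / 4) (1 / 2 - b) (2 * τ) (x - y) -
        thetaChar (1 / 4) (1 / 2 - b) (2 * τ) (-(x + y)) *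
          thetaChar (1 / 4) (1 / 2 + b) (2 * τ) (-(x - y)) := by
  rw [thetaChar_mul_thetaChar hτ, show (1 / 2 + 0 + 1) / 2 = 1 - (1 / 4 : ℂ) by norm_num,
    show (1 / 2 - 0 + 1) / 2 = 1 - (1 / 4 : ℂ) by norm_num, thetaChar_one_sub, thetaChar_one_sub,
    show -(1 / 2 + b) = 1 / 2 - b - 1 by ring, show -(1 / 2 - b) = 1 / 2 + b - 1 by ring,
    thetaChar_sub_one_quarter, thetaChar_sub_one_quarter,
    show (1 / 2 + 0) / 2 = (1 / 4 : ℂ) by norm_num, show (1 / 2 - 0) / 2 = (1 / 4 : ℂ) by norm_num]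
  linear_combination thetaChar (1 / 4) (1 / 2 - b) (2 * τ) (-(x + y)) *
    thetaChar (1 / 4) (1 / 2 + b) (2 * τ) (-(x - y)) * I_sq

def SatisfiesLameIdentity (T F : ℂ → ℂ) : Prop :=
  ∀ z h : ℂ, T h * F h * (T (z - h) * F (z + h) + T (z + h) * F (z - h)) =
    T (2 * h) * F 0 * T z * F z

lemma satisfiesLameIdentity_of_even_odd {T F A B : ℂ → ℂ} (hA : ∀ w, A (-w) = A w)
    (hB : ∀ w, B (-w) = -B w)
    (hTF : ∀ x y, T x * F y = A (x + y) * B (x - y) + B (x + y) * A (x - y)) :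
    SatisfiesLameIdentity T F := by
  intro z h
  have hB0 : B 0 = 0 := by
    have h0 := hB 0
    rw [neg_zero] at h0
    linear_combination h0 / 2
  rw [mul_assoc (T (2 * h) * F 0), hTF, hTF, hTF, hTF, hTF, sub_self, sub_self, add_zero,
    sub_zero, ← two_mul, ← two_mul, show z - h + (z + h) = 2 * z by ring,
    show z + h + (z - h) = 2 * z by ring, show z - h - (z + h) = -(2 * h) by ring,
    show z + h - (z - h) = 2 * h by ring, hA, hB, hB0]
  ring

lemma satisfiesLameIdentity_of_antisymm {T F R : ℂ → ℂ} (c : ℂ)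
    (hTF : ∀ x y, T x * F y = c * (R (x + y) * R (x - y) - R (-(x + y)) * R (-(x - y)))) :
    SatisfiesLameIdentity T F :=
  satisfiesLameIdentity_of_even_odd (A := fun w => c * (R w + R (-w)) / 2)
    (B := fun w => R w - R (-w)) (fun w => by simp only [neg_neg]; ring)
    (fun w => by simp only [neg_neg]; ring) (fun x y => by rw [hTF]; ring)

lemma SatisfiesLameIdentity.lame_equation {T F : ℂ → ℂ} (hTF : SatisfiesLameIdentity T F)
    {z h : ℂ} (hz : T z ≠ 0) (hh : T h ≠ 0) (hF : F h ≠ 0) :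
    T (z - h) / T z * F (z + h) + T (z + h) / T z * F (z - h) =
      T (2 * h) * F 0 / (T h * F h) * F z := by
  rw [div_mul_eq_mul_div, div_mul_eq_mul_div, ← add_div, div_eq_iff hz,
    div_mul_eq_mul_div, div_mul_eq_mul_div, eq_div_iff (mul_ne_zero hh hF)]
  linear_combination hTF z h

lemma satisfiesLameIdentity_th2 {τ : ℂ} (hτ : 0 < τ.im) :
    SatisfiesLameIdentity (th1 τ) (th2 τ) := by
  have half : -(1 / 2 : ℂ) = 1 / 2 + ((-1 : ℤ) : ℂ) := by push_cast; ring
  rw [th1_eq_thetaChar, th2_eq_thetaChar]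
  refine satisfiesLameIdentity_of_even_odd (A := thetaChar 0 (1 / 2) (2 * τ))
    (B := thetaChar (1 / 2) (1 / 2) (2 * τ)) (fun w => ?_) (fun w => ?_) (fun x y => ?_)
  · rw [thetaChar_neg, neg_zero, half, thetaChar_add_int, mul_zero, mul_zero, exp_zero, one_mul]
  · rw [thetaChar_neg, half, thetaChar_int_add, thetaChar_add_int,
      show 2 * (Real.pi : ℂ) * I * (((-1 : ℤ) : ℂ) * (1 / 2)) = -(Real.pi * I) by push_cast; ring,
      exp_neg_pi_mul_I, neg_one_mul]
  · rw [thetaChar_mul_thetaChar hτ, show (1 / 2 + 1 / 2 + 1) / 2 = 0 + ((1 : ℤ) : ℂ) by norm_num,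
      thetaChar_int_add, add_zero, sub_zero, add_halves, sub_self, zero_div, zero_add]
    ring

lemma satisfiesLameIdentity_th3 {τ : ℂ} (hτ : 0 < τ.im) :
    SatisfiesLameIdentity (th1 τ) (th3 τ) := by
  rw [th1_eq_thetaChar, th3_eq_thetaChar]
  refine satisfiesLameIdentity_of_antisymm 1 (R := thetaChar (1 / 4) (1 / 2) (2 * τ))
    fun x y => ?_
  rw [thetaChar_half_mul_thetaChar_zero hτ, add_zero, sub_zero, one_mul]

lemma satisfiesLameIdentity_th4 {τ : ℂ} (hτ : 0 < τ.im) :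
    SatisfiesLameIdentity (th1 τ) (th4 τ) := by
  rw [th1_eq_thetaChar, th4_eq_thetaChar]
  refine satisfiesLameIdentity_of_antisymm I (R := thetaChar (1 / 4) 0 (2 * τ)) fun x y => ?_
  rw [thetaChar_half_mul_thetaChar_zero hτ, sub_self,
    show (1 / 2 + 1 / 2 : ℂ) = 0 + ((1 : ℤ) : ℂ) by norm_num, thetaChar_add_int, thetaChar_add_int,
    show 2 * (Real.pi : ℂ) * I * (((1 : ℤ) : ℂ) * (1 / 4)) = Real.pi / 2 * I by push_cast; ring,
    exp_pi_div_two_mul_I]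
  ring

/-- Lemma 6 ("a1eigen"): for `i = 2, 3, 4` the theta function `θᵢ` solves the
difference Lamé (two-body Ruijsenaars) equation with coupling `ℓ = 1`, with
eigenvalue `Eᵢ = θ₁(2h)θᵢ(0)/(θ₁(h)θᵢ(h))`; equivalently the corresponding
entire-function identity holds. -/
theorem stmt_3 (τ : ℂ) (hτ : 0 < τ.im) (F : ℂ → ℂ)
    (hF : F = th2 τ ∨ F = th3 τ ∨ F = th4 τ) (z h : ℂ) :
    th1 τ h * F h * (th1 τ (z - h) * F (z + h) + th1 τ (z + h) * F (z - h))
      = th1 τ (2 * h) * F 0 * th1 τ z * F z ∧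
    (th1 τ z ≠ 0 → th1 τ h ≠ 0 → F h ≠ 0 →
      th1 τ (z - h) / th1 τ z * F (z + h) + th1 τ (z + h) / th1 τ z * F (z - h)
        = th1 τ (2 * h) * F 0 / (th1 τ h * F h) * F z) := by
  have hTF : SatisfiesLameIdentity (th1 τ) F := by
    rcases hF with rfl | rfl | rfl
    exacts [satisfiesLameIdentity_th2 hτ, satisfiesLameIdentity_th3 hτ,
      satisfiesLameIdentity_th4 hτ]
  exact ⟨hTF z h, hTF.lame_equation⟩
end

section
/- Set Δ(λ₁,λ₂) = θ(λ₊)·θ(λ₋). For every function f : ℂ² → ℂ that is holomorphic near a point λ = (λ₁,λ₂) with θ(λ₊) ≠ 0 and θ(λ₋) ≠ 0, one has the gauge-transformation identity (M_{1,2}(Δ·f))(λ) = Δ(λ)·[ (∂₁² + ∂₂²)f(λ) + 4( (log θ)″(λ₊) + (log θ)″(λ₋) )·f(λ) ], where M_{1,2} is the second-order differential operator (M_{1,2}g)(λ) = (∂₁² + ∂₂²)g(λ) − 2[θ′(λ₊)/θ(λ₊) + θ′(λ₋)/θ(λ₋)]·∂₁g(λ) − 2[θ′(λ₊)/θ(λ₊)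 − θ′(λ₋)/θ(λ₋)]·∂₂g(λ) + 2[θ″(λ₊)/θ(λ₊) + θ″(λ₋)/θ(λ₋)]·g(λ), and (log θ)″(z) = θ″(z)/θ(z) − (θ′(z)/θ(z))². Thus the differential limit of the system is, after conjugation by Δ, the Schrödinger operator ∂₁² + ∂₂² + 4((log θ₁)″(λ₁+λ₂) + (log θ₁)″(λ₁−λ₂)) of Inozemtsev type. -/
open Complex

/-- The partial derivative `∂₁`. -/
noncomputable def D1 (f : ℂ × ℂ → ℂ) (x : ℂ × ℂ) : ℂ := fderiv ℂ f x (1, 0)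

/-- The partial derivative `∂₂`. -/
noncomputable def D2 (f : ℂ × ℂ → ℂ) (x : ℂ × ℂ) : ℂ := fderiv ℂ f x (0, 1)

/-- The second-order differential operator `M_{1,2}` appearing in the
differential limit of `M̃₁`. -/
noncomputable def M12 (τ : ℂ) (f : ℂ × ℂ → ℂ) (l : ℂ × ℂ) : ℂ :=
  D1 (D1 f) l + D2 (D2 f) l
  - 2 * (deriv (th1 τ) (l.1 + l.2) / th1 τ (l.1 + l.2)
        + deriv (th1 τ) (l.1 - l.2) / th1 τ (l.1 - l.2)) * D1 f l
  - 2 * (deriv (th1 τ) (l.1 + l.2) / th1 τ (l.1 + l.2)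
        - deriv (th1 τ) (l.1 - l.2) / th1 τ (l.1 - l.2)) * D2 f l
  + 2 * (deriv (deriv (th1 τ)) (l.1 + l.2) / th1 τ (l.1 + l.2)
        + deriv (deriv (th1 τ)) (l.1 - l.2) / th1 τ (l.1 - l.2)) * f l

/-- The second logarithmic derivative `(log θ)″(z)`. -/
noncomputable def logTh'' (τ z : ℂ) : ℂ :=
  deriv (deriv (th1 τ)) z / th1 τ z - (deriv (th1 τ) z / th1 τ z)^2

/-
`Δ·f` is a product `φ(λ₊) φ(λ₋) f(λ)`, and the derivative of any such product in a direction
`v` is again a sum of products of the same shape, with `φ` replaced by `φ'` and weighted by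
`v₁ + v₂` resp. `v₁ - v₂`. Differentiating twice and summing over `v = (1,0), (0,1)`, the mixed
terms `φ'(λ₊)φ'(λ₋)` cancel because `(v₁ + v₂)(v₁ - v₂) = ±1`, and what remains is an algebraic
identity once `θ(λ₊)θ(λ₋)` is invertible. The only analytic input is that `θ₁` is entire, which
follows from writing it as an exponential times `jacobiTheta₂`.
-/

lemma th1_eq_exp_mul_jacobiTheta₂ (τ z : ℂ) :
    th1 τ z = cexp (Real.pi * I * (z + 1/2 + τ/4)) * jacobiTheta₂ (z + (1 + τ)/2) τ := by
  rw [th1, jacobiTheta₂, ← tsum_mul_left]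
  refine tsum_congr fun k => ?_
  rw [jacobiTheta₂_term, ← Complex.exp_add]
  ring_nf

lemma differentiable_th1 {τ : ℂ} (hτ : 0 < τ.im) : Differentiable ℂ (th1 τ) := by
  rw [funext (th1_eq_exp_mul_jacobiTheta₂ τ)]
  refine (Complex.differentiable_exp.comp (by fun_prop)).mul fun z => ?_
  exact (differentiableAt_jacobiTheta₂_fst _ hτ).comp z (differentiableAt_id.add_const _)

section LightConeProduct

open ContinuousLinearMap

variable {ψ χ φ : ℂ → ℂ} {h : ℂ × ℂ → ℂ} {x : ℂ × ℂ}

lemma hasFDerivAt_lightCone_mul (hψ : DifferentiableAt ℂ ψ (x.1 + x.2))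
    (hχ : DifferentiableAt ℂ χ (x.1 - x.2)) {h' : ℂ × ℂ →L[ℂ] ℂ} (hh : HasFDerivAt h h' x) :
    HasFDerivAt (fun y => ψ (y.1 + y.2) * χ (y.1 - y.2) * h y)
      ((deriv ψ (x.1 + x.2) * χ (x.1 - x.2) * h x) • (fst ℂ ℂ ℂ + snd ℂ ℂ ℂ)
        + (ψ (x.1 + x.2) * deriv χ (x.1 - x.2) * h x) • (fst ℂ ℂ ℂ - snd ℂ ℂ ℂ)
        + (ψ (x.1 + x.2) * χ (x.1 - x.2)) • h') x := by
  have hP := hψ.hasDerivAt.comp_hasFDerivAt x (fst ℂ ℂ ℂ + snd ℂ ℂ ℂ).hasFDerivAt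
  have hM := hχ.hasDerivAt.comp_hasFDerivAt x (fst ℂ ℂ ℂ - snd ℂ ℂ ℂ).hasFDerivAt
  refine ((hP.mul hM).mul hh).congr_fderiv (ext fun v => ?_)
  simp only [add_apply, sub_apply, smul_apply, coe_fst', coe_snd', smul_eq_mul, Pi.mul_apply,
    Function.comp_apply]
  ring

lemma fderiv_lightCone_mul_apply (hψ : DifferentiableAt ℂ ψ (x.1 + x.2))
    (hχ : DifferentiableAt ℂ χ (x.1 - x.2)) (hh : DifferentiableAt ℂ h x) (v : ℂ × ℂ) :
    fderiv ℂ (fun y => ψ (y.1 + y.2) * χ (y.1 - y.2) * h y) x v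
      = (v.1 + v.2) * (deriv ψ (x.1 + x.2) * χ (x.1 - x.2) * h x)
        + (v.1 - v.2) * (ψ (x.1 + x.2) * deriv χ (x.1 - x.2) * h x)
        + ψ (x.1 + x.2) * χ (x.1 - x.2) * fderiv ℂ h x v := by
  rw [(hasFDerivAt_lightCone_mul hψ hχ hh.hasFDerivAt).fderiv]
  simp only [add_apply, sub_apply, smul_apply, coe_fst', coe_snd', smul_eq_mul]
  ring

lemma fderiv_fderiv_lightCone_mul_apply (hφ : Differentiable ℂ φ) {f : ℂ × ℂ → ℂ}
    (hf : AnalyticAt ℂ f x) (v : ℂ × ℂ) :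
    fderiv ℂ (fun y => fderiv ℂ (fun z => φ (z.1 + z.2) * φ (z.1 - z.2) * f z) y v) x v
      = ((v.1 + v.2) ^ 2 * deriv (deriv φ) (x.1 + x.2) * φ (x.1 - x.2)
          + 2 * (v.1 + v.2) * (v.1 - v.2) * deriv φ (x.1 + x.2) * deriv φ (x.1 - x.2)
          + (v.1 - v.2) ^ 2 * φ (x.1 + x.2) * deriv (deriv φ) (x.1 - x.2)) * f x
        + 2 * ((v.1 + v.2) * deriv φ (x.1 + x.2) * φ (x.1 - x.2)
          + (v.1 - v.2) * φ (x.1 + x.2) * deriv φ (x.1 - x.2)) * fderiv ℂ f x v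
        + φ (x.1 + x.2) * φ (x.1 - x.2) * fderiv ℂ (fun y => fderiv ℂ f y v) x v := by
  have hφ' := hφ.deriv
  have hfirst : (fun y => fderiv ℂ (fun z => φ (z.1 + z.2) * φ (z.1 - z.2) * f z) y v)
      =ᶠ[nhds x] fun y => (v.1 + v.2) * (deriv φ (y.1 + y.2) * φ (y.1 - y.2) * f y)
        + (v.1 - v.2) * (φ (y.1 + y.2) * deriv φ (y.1 - y.2) * f y)
        + φ (y.1 + y.2) * φ (y.1 - y.2) * fderiv ℂ f y v :=
    hf.eventually_analyticAt.mono fun y hy =>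
      fderiv_lightCone_mul_apply (hφ _) (hφ _) hy.differentiableAt v
  have hDf := hf.differentiableAt.hasFDerivAt
  have hDvf := (hf.fderiv.differentiableAt.clm_apply (differentiableAt_const v)).hasFDerivAt
  rw [hfirst.fderiv_eq,
    ((((hasFDerivAt_lightCone_mul (hφ' _) (hφ _) hDf).const_mul (v.1 + v.2)).fun_add
      ((hasFDerivAt_lightCone_mul (hφ _) (hφ' _) hDf).const_mul (v.1 - v.2))).fun_add
      (hasFDerivAt_lightCone_mul (hφ _) (hφ _) hDvf)).fderiv]
  simp only [add_apply, sub_apply, smul_apply, coe_fst', coe_snd', smul_eq_mul]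
  ring

end LightConeProduct

/-- Conjugating the differential limit `M_{1,2}` by `Δ(λ) = θ(λ₊)θ(λ₋)` yields
the Inozemtsev-type Schrödinger operator
`∂₁² + ∂₂² + 4((log θ₁)″(λ₊) + (log θ₁)″(λ₋))`. -/
theorem stmt_15 (τ : ℂ) (hτ : 0 < τ.im) (f : ℂ × ℂ → ℂ) (l : ℂ × ℂ)
    (hf : AnalyticAt ℂ f l)
    (hp : th1 τ (l.1 + l.2) ≠ 0) (hm : th1 τ (l.1 - l.2) ≠ 0) :
    M12 τ (fun x => th1 τ (x.1 + x.2) * th1 τ (x.1 - x.2) * f x) l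
      = th1 τ (l.1 + l.2) * th1 τ (l.1 - l.2) *
          (D1 (D1 f) l + D2 (D2 f) l
            + 4 * (logTh'' τ (l.1 + l.2) + logTh'' τ (l.1 - l.2)) * f l) := by
  have hθ := differentiable_th1 hτ
  unfold M12 logTh'' D1 D2
  rw [fderiv_fderiv_lightCone_mul_apply hθ hf, fderiv_fderiv_lightCone_mul_apply hθ hf,
    fderiv_lightCone_mul_apply (hθ _) (hθ _) hf.differentiableAt,
    fderiv_lightCone_mul_apply (hθ _) (hθ _) hf.differentiableAt]
  field_simp
  ring
end
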